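/- arXiv:1302.6164 — 3 statements merged into one kernel-verified Lean document; each statement's English description precedes it below -/
import Mathlib

section
/- Let K be a convex body in ℝⁿ, u a unit vector, and t > 0 be such that K and tu + K touch (i.e., intersect but have disjoint interiors, equivalently t equals the length of a maximal chord of K parallel to u). Then vol(conv(K ∪ (tu + K))) = vol(K) + t · vol_{n-1}(K | u^⊥), where K | u^⊥ denotes the orthogonal projection of K onto the hyperplane through the origin perpendicular to u. -/
open MeasureTheory Metric Pointwise

/-- Volume of the k-dimensional Euclidean unit ball. -/
noncomputable def ubVol (k : ℕ) : ℝ :=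
  (volume (closedBall (0 : EuclideanSpace ℝ (Fin k)) 1)).toReal

/-- (n-1)-dimensional volume of the orthogonal projection of `K` onto the
hyperplane through the origin perpendicular to `u`. -/
noncomputable def projVol {n : ℕ} (K : Set (EuclideanSpace ℝ (Fin n)))
    (u : EuclideanSpace ℝ (Fin n)) : ℝ :=
  (volume (((ℝ ∙ u)ᗮ.orthogonalProjectionOnto) '' K)).toReal

/-- Length of a maximal chord of `K` parallel to `u`:
`d_K(u) = max {t ≥ 0 : K ∩ (t • u + K) ≠ ∅}`. -/
noncomputable def maxChord {n : ℕ} (K : Set (EuclideanSpace ℝ (Fin n)))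
    (u : EuclideanSpace ℝ (Fin n)) : ℝ :=
  sSup {t : ℝ | 0 ≤ t ∧ (K ∩ ((t • u) +ᵥ K)).Nonempty}

/-- Support function of `K`. -/
noncomputable def suppFn {n : ℕ} (K : Set (EuclideanSpace ℝ (Fin n)))
    (u : EuclideanSpace ℝ (Fin n)) : ℝ :=
  sSup ((fun x => (inner ℝ x u : ℝ)) '' K)

/-- Width of `K` in direction `u` (for a unit vector `u`). -/
noncomputable def widthFn {n : ℕ} (K : Set (EuclideanSpace ℝ (Fin n)))
    (u : EuclideanSpace ℝ (Fin n)) : ℝ :=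
  suppFn K u + suppFn K (-u)

/-- Two sets touch: they intersect, but their interiors are disjoint. -/
def Touching {n : ℕ} (A B : Set (EuclideanSpace ℝ (Fin n))) : Prop :=
  (A ∩ B).Nonempty ∧ Disjoint (interior A) (interior B)

/-- A convex body: compact, convex, with nonempty interior. -/
def IsConvexBody {n : ℕ} (K : Set (EuclideanSpace ℝ (Fin n))) : Prop :=
  Convex ℝ K ∧ IsCompact K ∧ (interior K).Nonempty

/-- An ellipsoid: the image of the unit ball under an invertible affine map. -/
def IsEllipsoid {n : ℕ} (K : Set (EuclideanSpace ℝ (Fin n))) : Prop :=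
  ∃ f : EuclideanSpace ℝ (Fin n) ≃ᵃ[ℝ] EuclideanSpace ℝ (Fin n),
    K = f '' closedBall 0 1

/-! For convex `K`, `conv (K ∪ (t • u +ᵥ K)) = K + [0, t • u]`. In the volume-preserving
coordinates `x ↦ (⟪u, x⟫, x | u^⊥)` every line parallel to `u` that meets `K` does so in a bounded
interval, and adding the segment lengthens each such chord by exactly `t`; integrating the chord
lengths over `K | u^⊥` (Fubini) gives `vol K + t · vol_{n-1} (K | u^⊥)`. -/

open Set Bornology

section Line

theorem Real.volume_eq_ediam_of_ordConnected {s : Set ℝ} (hs : s.OrdConnected)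
    (hb : IsBounded s) : volume s = ediam s := by
  refine le_antisymm (Real.volume_le_diam s) ?_
  rcases s.eq_empty_or_nonempty with rfl | hne
  · simp
  rw [Real.ediam_eq hb, ← Real.volume_Ioo]
  exact measure_mono <|
    IsConnected.Ioo_csInf_csSup_subset ⟨hne, hs.isPreconnected⟩ hb.bddBelow hb.bddAbove

theorem Real.volume_add_Icc_of_ordConnected {s : Set ℝ} (hs : s.OrdConnected)
    (hb : IsBounded s) (hne : s.Nonempty) {t : ℝ} (ht : 0 ≤ t) :
    volume (s + Icc 0 t) = volume s + ENNReal.ofReal t := by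
  have hconv : Convex ℝ (s + Icc 0 t) :=
    (convex_iff_ordConnected.2 hs).add (convex_Icc 0 t)
  have hIcc : (Icc 0 t).Nonempty := nonempty_Icc.2 ht
  rw [Real.volume_eq_ediam_of_ordConnected (convex_iff_ordConnected.1 hconv)
      (hb.add (isBounded_Icc 0 t)), Real.volume_eq_ediam_of_ordConnected hs hb,
    Real.ediam_eq (hb.add (isBounded_Icc 0 t)), Real.ediam_eq hb,
    csSup_add hne hb.bddAbove hIcc bddAbove_Icc, csInf_add hne hb.bddBelow hIcc bddBelow_Icc,
    csSup_Icc ht, csInf_Icc ht, ← ENNReal.ofReal_add _ ht]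
  · congr 1
    ring
  · exact sub_nonneg.2 (Real.sInf_le_sSup s hb.bddBelow hb.bddAbove)

end Line

section Prism

variable {X : Type*}

theorem Set.preimage_mk_left_add_prod_zero [AddZeroClass X] (A : Set (ℝ × X))
    (T : Set ℝ) (x : X) :
    (fun s => (s, x)) ⁻¹' (A + T ×ˢ {0}) = (fun s => (s, x)) ⁻¹' A + T := by
  ext s
  constructor
  · rintro ⟨⟨a, y⟩, ha, ⟨r, z⟩, ⟨hr, rfl : z = 0⟩, hsum⟩
    obtain ⟨rfl, rfl⟩ := Prod.ext_iff.1 hsum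
    exact ⟨a, by simpa using ha, r, hr, rfl⟩
  · rintro ⟨a, ha, r, hr, rfl⟩
    exact ⟨(a, x), ha, (r, 0), ⟨hr, rfl⟩, by simp⟩

theorem Convex.ordConnected_preimage_mk_left [AddCommMonoid X] [Module ℝ X] {A : Set (ℝ × X)}
    (hA : Convex ℝ A) (x : X) : ((fun s => (s, x)) ⁻¹' A).OrdConnected := by
  refine convex_iff_ordConnected.1 fun a ha b hb p q hp hq hpq => ?_
  have hmk : ((p • a + q • b, x) : ℝ × X) = p • (a, x) + q • (b, x) := by
    simp [← add_smul, hpq]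
  simpa only [mem_preimage, hmk] using hA ha hb hp hq hpq

variable [AddZeroClass X] [TopologicalSpace X] [ContinuousAdd X] [T2Space X]
  [MeasurableSpace X] [OpensMeasurableSpace X]

theorem MeasureTheory.Measure.volume_prod_add_Icc_prod_zero (μ : Measure X) [SFinite μ]
    {A : Set (ℝ × X)} (hA : IsCompact A) (hslice : ∀ x, ((fun s => (s, x)) ⁻¹' A).OrdConnected)
    {t : ℝ} (ht : 0 ≤ t) :
    (volume.prod μ) (A + Icc 0 t ×ˢ {0})
      = volume.prod μ A + ENNReal.ofReal t * μ (Prod.snd '' A) := by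
  have hprism : IsCompact (A + Icc 0 t ×ˢ ({0} : Set X)) :=
    hA.add (isCompact_Icc.prod isCompact_singleton)
  have hslice_vol : ∀ x, volume ((fun s => (s, x)) ⁻¹' (A + Icc 0 t ×ˢ {0}))
      = volume ((fun s => (s, x)) ⁻¹' A) + (Prod.snd '' A).indicator (fun _ => .ofReal t) x := by
    intro x
    rw [preimage_mk_left_add_prod_zero]
    by_cases hx : x ∈ Prod.snd '' A
    · obtain ⟨⟨s, x⟩, hs, rfl⟩ := hx
      have hb : IsBounded ((fun s => (s, x)) ⁻¹' A) :=
        (hA.image continuous_fst).isBounded.subset fun s hs => ⟨_, hs, rfl⟩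
      rw [indicator_of_mem (mem_image_of_mem _ hs)]
      exact Real.volume_add_Icc_of_ordConnected (hslice x) hb ⟨s, hs⟩ ht
    · have hempty : (fun s => (s, x)) ⁻¹' A = ∅ :=
        eq_empty_of_forall_notMem fun s hs => hx ⟨_, hs, rfl⟩
      simp [hempty, indicator_of_notMem hx]
  rw [Measure.prod_apply_symm hprism.isClosed.measurableSet,
    Measure.prod_apply_symm hA.isClosed.measurableSet, lintegral_congr hslice_vol,
    lintegral_add_left (measurable_measure_prodMk_right hA.isClosed.measurableSet),
    lintegral_indicator_const (hA.image continuous_snd).isClosed.measurableSet]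

end Prism

section InnerProductSpace

variable {E : Type*} [NormedAddCommGroup E] [InnerProductSpace ℝ E]

/-- The coordinates `x ↦ (⟪u, x⟫, x | u^⊥)`; the first one is written as
`(toSpanUnitSingleton u hu).symm` of the projection onto `ℝ ∙ u`. -/
noncomputable def spanSingletonOrthogonalEquiv (u : E) (hu : ‖u‖ = 1) :
    E ≃L[ℝ] ℝ × (ℝ ∙ u)ᗮ :=
  (ℝ ∙ u).orthogonalDecomposition.toContinuousLinearEquiv.trans <|
    (WithLp.prodContinuousLinearEquiv 2 ℝ _ _).trans <|
      (LinearIsometryEquiv.toSpanUnitSingleton u hu).symm.toContinuousLinearEquiv.prodCongr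
        (ContinuousLinearEquiv.refl ℝ _)

variable {u : E}

theorem spanSingletonOrthogonalEquiv_apply (hu : ‖u‖ = 1) (x : E) :
    spanSingletonOrthogonalEquiv u hu x =
      ((LinearIsometryEquiv.toSpanUnitSingleton u hu).symm ((ℝ ∙ u).orthogonalProjectionOnto x),
        (ℝ ∙ u)ᗮ.orthogonalProjectionOnto x) := by
  simp [spanSingletonOrthogonalEquiv]

theorem spanSingletonOrthogonalEquiv_smul (hu : ‖u‖ = 1) (s : ℝ) :
    spanSingletonOrthogonalEquiv u hu (s • u) = (s, 0) := by
  have hsu : s • u ∈ ℝ ∙ u := Submodule.smul_mem _ s (Submodule.mem_span_singleton_self u)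
  have hproj : (ℝ ∙ u).orthogonalProjectionOnto (s • u) =
      LinearIsometryEquiv.toSpanUnitSingleton u hu s :=
    Submodule.orthogonalProjectionOnto_mem_subspace_eq_self
      (LinearIsometryEquiv.toSpanUnitSingleton u hu s)
  rw [spanSingletonOrthogonalEquiv_apply, hproj, LinearIsometryEquiv.symm_apply_apply,
    Submodule.orthogonalProjectionOnto_orthogonal_apply_eq_zero hsu]

variable [FiniteDimensional ℝ E] [MeasurableSpace E] [BorelSpace E]

theorem measurePreserving_spanSingletonOrthogonalEquiv (hu : ‖u‖ = 1) :
    MeasurePreserving (spanSingletonOrthogonalEquiv u hu) :=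
  ((LinearIsometryEquiv.toSpanUnitSingleton u hu).symm.measurePreserving.prod
    (MeasurePreserving.id volume)).comp <|
    (WithLp.volume_preserving_ofLp _ _).comp (ℝ ∙ u).orthogonalDecomposition.measurePreserving

theorem Convex.volume_add_segment {K : Set E} (hK : Convex ℝ K) (hKc : IsCompact K)
    (hu : ‖u‖ = 1) {t : ℝ} (ht : 0 ≤ t) :
    volume (K + segment ℝ 0 (t • u))
      = volume K + ENNReal.ofReal t * volume ((ℝ ∙ u)ᗮ.orthogonalProjectionOnto '' K) := by
  set e := spanSingletonOrthogonalEquiv u hu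
  have he : ∀ s, volume (e '' s) = volume s := fun s => by
    rw [← (measurePreserving_spanSingletonOrthogonalEquiv hu).measure_preimage_emb
      e.toHomeomorph.measurableEmbedding, e.injective.preimage_image]
  have hseg : e '' segment ℝ 0 (t • u) = Icc 0 t ×ˢ {0} := by
    calc e '' segment ℝ 0 (t • u) = segment ℝ (e 0) (e (t • u)) :=
          image_segment ℝ (e : E →ₗ[ℝ] ℝ × (ℝ ∙ u)ᗮ).toAffineMap 0 (t • u)
      _ = (fun s => (s, 0)) '' segment ℝ 0 t := by
          rw [map_zero, spanSingletonOrthogonalEquiv_smul, Prod.image_mk_segment_left,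
            Prod.mk_zero_zero]
      _ = Icc 0 t ×ˢ {0} := by rw [segment_eq_Icc ht, prod_singleton]
  have hslice : ∀ x, ((fun s => (s, x)) ⁻¹' (e '' K)).OrdConnected :=
    (hK.linear_image (e : E →ₗ[ℝ] ℝ × (ℝ ∙ u)ᗮ)).ordConnected_preimage_mk_left
  rw [← he, image_add e, hseg, Measure.volume_eq_prod,
    Measure.volume_prod_add_Icc_prod_zero _ (hKc.image e.continuous) hslice ht,
    ← Measure.volume_eq_prod, he, image_image]
  simp only [e, spanSingletonOrthogonalEquiv_apply]

end InnerProductSpace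

theorem Convex.convexHull_union_vadd {E : Type*} [AddCommGroup E] [Module ℝ E] {K : Set E}
    (hK : Convex ℝ K) (v : E) : convexHull ℝ (K ∪ (v +ᵥ K)) = K + segment ℝ 0 v := by
  have hsum : K + {0, v} = K ∪ (v +ᵥ K) := by
    rw [insert_eq, add_union, add_singleton, add_singleton, ← image_vadd]
    simp [add_comm]
  rw [← hsum, convexHull_add, hK.convexHull_eq, convexHull_pair]

theorem volume_convexHull_union_touching_translate_general {n : ℕ}
    (K : Set (EuclideanSpace ℝ (Fin n))) (hK : IsConvexBody K)
    (u : EuclideanSpace ℝ (Fin n)) (hu : ‖u‖ = 1) (t : ℝ) (ht : 0 < t) :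
    (volume (convexHull ℝ (K ∪ ((t • u) +ᵥ K)))).toReal
      = (volume K).toReal + t * projVol K u := by
  obtain ⟨hconv, hcpt, -⟩ := hK
  have hproj : volume ((ℝ ∙ u)ᗮ.orthogonalProjectionOnto '' K) ≠ ⊤ :=
    (hcpt.image (ℝ ∙ u)ᗮ.orthogonalProjectionOnto.continuous).measure_lt_top.ne
  rw [hconv.convexHull_union_vadd, hconv.volume_add_segment hcpt hu ht.le,
    ENNReal.toReal_add hcpt.measure_lt_top.ne (ENNReal.mul_ne_top ENNReal.ofReal_ne_top hproj),
    ENNReal.toReal_mul,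
    ENNReal.toReal_ofReal ht.le, projVol]

/-- If `K` and its translate `t • u + K` touch, the volume of their convex hull is
`vol K + t · vol_{n-1}(K | u^⊥)`. -/
theorem volume_convexHull_union_touching_translate {n : ℕ} (hn : 1 ≤ n)
    (K : Set (EuclideanSpace ℝ (Fin n))) (hK : IsConvexBody K)
    (u : EuclideanSpace ℝ (Fin n)) (hu : ‖u‖ = 1) (t : ℝ) (ht : 0 < t)
    (htouch : Touching K ((t • u) +ᵥ K)) :
    (volume (convexHull ℝ (K ∪ ((t • u) +ᵥ K)))).toReal
      = (volume K).toReal + t * projVol K u :=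
  volume_convexHull_union_touching_translate_general K hK u hu t ht
end

section
/- If E is an ellipsoid in ℝⁿ (n ≥ 2), then for every touching translate E' = v + E, vol(conv(E ∪ E')) / vol(E) = 1 + 2 v_{n-1} / v_n. -/
open MeasureTheory Metric Pointwise

/-!
An invertible affine map multiplies every volume by the same factor and preserves touching, so we
may take `E` to be the unit ball `B`; then `v + B` touches `B` exactly when `‖v‖ = 2`. The convex
hull of `B ∪ (v + B)` is the capsule `[0, v] + B`. After an isometry taking `v` to `(‖v‖, 0)` in
`ℝ × ℝⁿ⁻¹`, the hyperplanes `x₁ = 0` and `x₁ = ‖v‖` cut it into two half-balls, which together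
have the volume of `B`, and a cylinder of height `‖v‖` over an `(n-1)`-dimensional unit ball.
-/

open Module Set WithLp

section Affine

variable {𝕜 E F : Type*} [Ring 𝕜] [AddCommGroup E] [AddCommGroup F] [Module 𝕜 E] [Module 𝕜 F]

theorem AffineEquiv.image_convexHull [PartialOrder 𝕜] (f : E ≃ᵃ[𝕜] F) (s : Set E) :
    f '' convexHull 𝕜 s = convexHull 𝕜 (f '' s) :=
  f.toAffineMap.image_convexHull s

theorem AffineEquiv.image_vadd_set {P Q : Type*} [AddTorsor E P] [AddTorsor F Q]
    (f : P ≃ᵃ[𝕜] Q) (v : E) (s : Set P) : f '' (v +ᵥ s) = f.linear v +ᵥ f '' s := by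
  simp only [← image_vadd, image_image, f.map_vadd]

end Affine

theorem convexHull_union_vadd_eq_segment_add {𝕜 E : Type*} [Field 𝕜] [LinearOrder 𝕜]
    [IsStrictOrderedRing 𝕜] [AddCommGroup E] [Module 𝕜 E] {s : Set E} (hs : Convex 𝕜 s) (v : E) :
    convexHull 𝕜 (s ∪ (v +ᵥ s)) = segment 𝕜 0 v + s := by
  have hpair : ({0, v} : Set E) + s = s ∪ (v +ᵥ s) := by
    rw [insert_eq, union_add, singleton_add, singleton_add, ← image_vadd]
    simp
  rw [← hpair, convexHull_add, convexHull_pair, hs.convexHull_eq]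

section AddHaar

variable {E : Type*} [NormedAddCommGroup E] [NormedSpace ℝ E] [MeasurableSpace E] [BorelSpace E]
  [FiniteDimensional ℝ E] (μ : Measure E) [μ.IsAddHaarMeasure]

theorem MeasureTheory.Measure.addHaar_image_affineMap (f : E →ᵃ[ℝ] E) (s : Set E) :
    μ (f '' s) = ENNReal.ofReal |LinearMap.det f.linear| * μ s := by
  have hf : ⇑f = (f 0 +ᵥ ·) ∘ f.linear := by
    ext x
    simpa [add_comm] using f.map_vadd 0 x
  rw [hf, image_comp, image_vadd, measure_vadd]
  exact μ.addHaar_image_linearMap f.linear s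

theorem MeasureTheory.Measure.addHaar_image_affineEquiv_toReal_div (f : E ≃ᵃ[ℝ] E)
    (s t : Set E) : (μ (f '' s)).toReal / (μ (f '' t)).toReal = (μ s).toReal / (μ t).toReal := by
  have hdet : 0 < |LinearMap.det (f.linear : E →ₗ[ℝ] E)| :=
    abs_pos.2 f.linear.isUnit_det'.ne_zero
  rw [← f.coe_toAffineMap, μ.addHaar_image_affineMap, μ.addHaar_image_affineMap,
    f.linear_toAffineMap, ENNReal.toReal_mul, ENNReal.toReal_mul, ENNReal.toReal_ofReal hdet.le,
    mul_div_mul_left _ _ hdet.ne']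

end AddHaar

section Capsule

variable {F : Type*} [NormedAddCommGroup F]

theorem WithLp.prod_mem_closedBall_zero_iff {r : ℝ} (hr : 0 ≤ r) (x : WithLp 2 (ℝ × F)) :
    x ∈ closedBall 0 r ↔ x.fst ^ 2 + ‖x.snd‖ ^ 2 ≤ r ^ 2 := by
  rw [mem_closedBall_zero_iff, ← sq_le_sq₀ (norm_nonneg x) hr, prod_norm_sq_eq_of_L2,
    Real.norm_eq_abs, sq_abs]

variable [InnerProductSpace ℝ F]

theorem WithLp.prod_segment_add_closedBall_eq_union {t r : ℝ} (ht : 0 ≤ t) (hr : 0 ≤ r) :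
    segment ℝ 0 (toLp 2 (t, (0 : F))) + closedBall 0 r =
      (closedBall 0 r ∩ {x | x.fst ≤ 0}) ∪ ofLp ⁻¹' (Ioc 0 t ×ˢ closedBall 0 r) ∪
        (toLp 2 (t, (0 : F)) +ᵥ (closedBall 0 r \ {x : WithLp 2 (ℝ × F) | x.fst ≤ 0})) := by
  have hseg : segment ℝ 0 (toLp 2 (t, (0 : F))) =
      (fun θ : ℝ ↦ θ • toLp 2 (t, (0 : F))) '' Icc 0 1 := by
    simp [segment_eq_image']
  ext x
  simp only [hseg, mem_add, mem_union, mem_inter_iff, mem_sdiff, mem_ofPred_eq, mem_preimage,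
    mem_prod, ofLp_fst, ofLp_snd, mem_Ioc, mem_vadd_set_iff_neg_vadd_mem,
    prod_mem_closedBall_zero_iff hr, mem_closedBall_zero_iff, vadd_eq_add, add_fst, add_snd,
    neg_fst, neg_snd, toLp_fst, toLp_snd, zero_add, neg_zero, not_le]
  constructor
  · rintro ⟨_, ⟨θ, ⟨hθ0, hθ1⟩, rfl⟩, b, hb, rfl⟩
    simp only [add_fst, add_snd, smul_fst, smul_snd, toLp_fst, toLp_snd, smul_eq_mul, smul_zero,
      zero_add]
    have hθt : θ * t ≤ t := by nlinarith
    have hθt' : 0 ≤ θ * t := by positivity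
    rcases le_or_gt (θ * t + b.fst) 0 with hl | hl
    · exact Or.inl (Or.inl ⟨by nlinarith, hl⟩)
    rcases le_or_gt (θ * t + b.fst) t with hm | hm
    · exact Or.inl (Or.inr ⟨⟨hl, hm⟩, by nlinarith [norm_nonneg b.snd]⟩)
    · exact Or.inr ⟨by nlinarith, by linarith⟩
  · rintro ((⟨hx, -⟩ | ⟨⟨hl, hm⟩, hx⟩) | ⟨hx, -⟩)
    · exact ⟨_, ⟨0, ⟨le_rfl, zero_le_one⟩, rfl⟩, x, hx, by simp⟩
    · have ht0 : t ≠ 0 := by linarith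
      refine ⟨_, ⟨x.fst / t, ⟨by positivity, div_le_one_of_le₀ hm ht⟩, rfl⟩,
        x - (x.fst / t) • toLp 2 (t, 0), ?_, by abel⟩
      simp only [sub_fst, sub_snd, smul_fst, smul_snd, toLp_fst, toLp_snd, smul_eq_mul,
        div_mul_cancel₀ _ ht0, sub_self, smul_zero, sub_zero]
      nlinarith [norm_nonneg x.snd]
    · exact ⟨_, ⟨1, ⟨zero_le_one, le_rfl⟩, rfl⟩, -toLp 2 (t, 0) + x, by simpa using hx, by simp⟩

variable [FiniteDimensional ℝ F]

theorem exists_linearIsometryEquiv_prod_apply_eq {V : Type*} [NormedAddCommGroup V]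
    [InnerProductSpace ℝ V] [FiniteDimensional ℝ V] (h : finrank ℝ V = finrank ℝ F + 1) (w : V) :
    ∃ φ : V ≃ₗᵢ[ℝ] WithLp 2 (ℝ × F), φ w = toLp 2 (‖w‖, 0) := by
  have hW : finrank ℝ V = finrank ℝ (WithLp 2 (ℝ × F)) := by
    rw [(WithLp.linearEquiv 2 ℝ (ℝ × F)).finrank_eq, finrank_prod, finrank_self, h, add_comm]
  let ψ : V ≃ₗᵢ[ℝ] WithLp 2 (ℝ × F) :=
    (stdOrthonormalBasis ℝ V).equiv (stdOrthonormalBasis ℝ _) (finCongr hW)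
  have hnorm : ‖ψ w‖ = ‖toLp 2 (‖w‖, (0 : F))‖ := by simp
  exact ⟨ψ.trans (Submodule.reflection (ℝ ∙ (ψ w - toLp 2 (‖w‖, 0)))ᗮ),
    Submodule.reflection_sub hnorm⟩

variable [MeasurableSpace F] [BorelSpace F]

theorem WithLp.prod_volume_segment_add_closedBall {t r : ℝ} (ht : 0 ≤ t) (hr : 0 ≤ r) :
    volume (segment ℝ 0 (toLp 2 (t, (0 : F))) + closedBall 0 r) =
      volume (closedBall (0 : WithLp 2 (ℝ × F)) r) +
        ENNReal.ofReal t * volume (closedBall (0 : F) r) := by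
  set H := {x : WithLp 2 (ℝ × F) | x.fst ≤ 0}
  set C := Ioc 0 t ×ˢ closedBall (0 : F) r
  set M : Set (WithLp 2 (ℝ × F)) := ofLp ⁻¹' C
  have hH : MeasurableSet H :=
    measurableSet_le (WithLp.continuous_fst 2 ℝ F).measurable measurable_const
  have hC : MeasurableSet C := measurableSet_Ioc.prod measurableSet_closedBall
  have hvolM : volume M = ENNReal.ofReal t * volume (closedBall (0 : F) r) := by
    rw [(volume_preserving_ofLp ℝ F).measure_preimage hC.nullMeasurableSet,
      Measure.volume_eq_prod, Measure.prod_prod, Real.volume_Ioc, sub_zero]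
  have hdisj₁ : Disjoint (closedBall 0 r ∩ H) M :=
    disjoint_left.2 fun x hx hx' ↦ (not_lt.2 hx.2) hx'.1.1
  have hdisj₂ : Disjoint (closedBall 0 r ∩ H ∪ M)
      (toLp 2 (t, (0 : F)) +ᵥ (closedBall 0 r \ H)) := by
    refine disjoint_left.2 fun x hx hx' ↦ ?_
    obtain ⟨y, ⟨-, hy⟩, rfl⟩ := hx'
    have : t < (toLp 2 (t, (0 : F)) +ᵥ y).fst := by
      simp only [vadd_eq_add, add_fst, toLp_fst]
      linarith [not_le.1 (show ¬ y.fst ≤ 0 from hy)]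
    rcases hx with ⟨-, hx⟩ | ⟨⟨-, hx⟩, -⟩ <;> simp only [H, mem_ofPred_eq, ofLp_fst] at hx <;>
      linarith
  rw [prod_segment_add_closedBall_eq_union ht hr, measure_union hdisj₂
    ((measurableSet_closedBall.diff hH).const_vadd _), measure_union hdisj₁ (hC.preimage
    (WithLp.measurable_ofLp 2 _)), measure_vadd, add_right_comm, measure_inter_add_sdiff _ hH,
    hvolM]

theorem LinearIsometryEquiv.volume_image {V W : Type*} [NormedAddCommGroup V]
    [InnerProductSpace ℝ V] [FiniteDimensional ℝ V] [MeasurableSpace V] [BorelSpace V]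
    [NormedAddCommGroup W] [InnerProductSpace ℝ W] [FiniteDimensional ℝ W] [MeasurableSpace W]
    [BorelSpace W] (φ : V ≃ₗᵢ[ℝ] W) (s : Set V) : volume (φ '' s) = volume s := by
  rw [φ.image_eq_preimage_symm]
  exact φ.symm.measurePreserving.measure_preimage_equiv (f := φ.symm.toMeasurableEquiv) s

theorem volume_segment_add_closedBall {V : Type*} [NormedAddCommGroup V] [InnerProductSpace ℝ V]
    [FiniteDimensional ℝ V] [MeasurableSpace V] [BorelSpace V]
    (h : finrank ℝ V = finrank ℝ F + 1) (w : V) {r : ℝ} (hr : 0 ≤ r) :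
    volume (segment ℝ 0 w + closedBall (0 : V) r) =
      volume (closedBall (0 : V) r) + ENNReal.ofReal ‖w‖ * volume (closedBall (0 : F) r) := by
  obtain ⟨φ, hφ⟩ := exists_linearIsometryEquiv_prod_apply_eq h w
  have hseg : φ '' segment ℝ 0 w = segment ℝ 0 (φ w) := by
    simpa using image_segment ℝ φ.toLinearEquiv.toLinearMap.toAffineMap 0 w
  rw [← φ.volume_image, ← φ.volume_image, image_add, hseg, φ.image_closedBall, map_zero, hφ,
    prod_volume_segment_add_closedBall (norm_nonneg w) hr]

end Capsule

section Touching

variable {n : ℕ}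

theorem touching_image_iff (h : EuclideanSpace ℝ (Fin n) ≃ₜ EuclideanSpace ℝ (Fin n))
    {A B : Set (EuclideanSpace ℝ (Fin n))} : Touching (h '' A) (h '' B) ↔ Touching A B := by
  simp only [Touching, ← h.image_interior, ← image_inter h.injective, image_nonempty,
    disjoint_image_iff h.injective]

theorem touching_closedBall_closedBall_iff {x y : EuclideanSpace ℝ (Fin n)} {r s : ℝ}
    (hr : 0 < r) (hs : 0 < s) : Touching (closedBall x r) (closedBall y s) ↔ dist x y = r + s := by
  rw [Touching, interior_closedBall x hr.ne', interior_closedBall y hs.ne',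
    ← not_disjoint_iff_nonempty_inter, disjoint_closedBall_closedBall_iff hr.le hs.le,
    disjoint_ball_ball_iff hr hs, not_lt]
  exact ⟨fun h ↦ le_antisymm h.1 h.2, fun h ↦ ⟨h.le, h.ge⟩⟩

end Touching

theorem ellipsoid_touching_translate_volume_ratio_general {n : ℕ}
    (E : Set (EuclideanSpace ℝ (Fin n))) (hE : IsEllipsoid E)
    (v : EuclideanSpace ℝ (Fin n)) (htouch : Touching E (v +ᵥ E)) :
    (volume (convexHull ℝ (E ∪ (v +ᵥ E)))).toReal / (volume E).toReal
      = 1 + 2 * ubVol (n - 1) / ubVol n := by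
  obtain ⟨f, rfl⟩ := hE
  set w := f.linear.symm v
  have hv : v +ᵥ f '' closedBall 0 1 =
      f '' (w +ᵥ closedBall (0 : EuclideanSpace ℝ (Fin n)) 1) := by
    rw [f.image_vadd_set, f.linear.apply_symm_apply]
  rw [hv] at htouch ⊢
  have hw : ‖w‖ = 2 := by
    rw [← f.coe_toHomeomorphOfFiniteDimensional, touching_image_iff, vadd_closedBall, vadd_eq_add,
      add_zero, touching_closedBall_closedBall_iff one_pos one_pos, dist_zero_left] at htouch
    norm_num [htouch]
  have hdim : finrank ℝ (EuclideanSpace ℝ (Fin n)) =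
      finrank ℝ (EuclideanSpace ℝ (Fin (n - 1))) + 1 := by
    have : n ≠ 0 := by
      rintro rfl
      norm_num [Subsingleton.elim w 0] at hw
    simp only [finrank_euclideanSpace_fin]
    omega
  rw [← image_union, ← f.image_convexHull, Measure.addHaar_image_affineEquiv_toReal_div,
    convexHull_union_vadd_eq_segment_add (convex_closedBall 0 1),
    volume_segment_add_closedBall hdim w zero_le_one, hw,
    ENNReal.toReal_add measure_closedBall_lt_top.ne
      (ENNReal.mul_ne_top ENNReal.ofReal_ne_top measure_closedBall_lt_top.ne),
    ENNReal.toReal_mul, ENNReal.toReal_ofReal zero_le_two]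
  have hball : 0 < ubVol n :=
    ENNReal.toReal_pos (measure_closedBall_pos volume 0 one_pos).ne' measure_closedBall_lt_top.ne
  change (ubVol n + 2 * ubVol (n - 1)) / ubVol n = _
  field_simp

/-- For an ellipsoid `E` and any touching translate `v + E`,
`vol(conv(E ∪ (v+E))) / vol(E) = 1 + 2 v_{n-1} / v_n`. -/
theorem ellipsoid_touching_translate_volume_ratio {n : ℕ} (hn : 2 ≤ n)
    (E : Set (EuclideanSpace ℝ (Fin n))) (hE : IsEllipsoid E)
    (v : EuclideanSpace ℝ (Fin n)) (htouch : Touching E (v +ᵥ E)) :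
    (volume (convexHull ℝ (E ∪ (v +ᵥ E)))).toReal / (volume E).toReal
      = 1 + 2 * ubVol (n - 1) / ubVol n :=
  ellipsoid_touching_translate_volume_ratio_general E hE v htouch
end

section
/- Let K be an o-symmetric plane convex body such that the area of the triangle conv{o, x, y} is the same constant for all pairs x, y ∈ bd K with x Birkhoff-orthogonal to y. Then Birkhoff orthogonality in the norm with unit ball K is a symmetric relation. -/
open MeasureTheory Metric Pointwise

/-- `x` is Birkhoff-orthogonal to `y` w.r.t. the body `K`: the line through `y` with
direction `x` supports `K` at `y`. -/
def BirkhoffOrth (K : Set (EuclideanSpace ℝ (Fin 2))) (x y : EuclideanSpace ℝ (Fin 2)) : Prop :=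
  y ∈ K ∧ ∀ t : ℝ, y + t • x ∉ interior K

/-! Given `x ⊥_B y`, maximize over `K` the linear functional `w ↦ det(y, w)`, signed so that it is
positive at `x`; let `u` be a maximizer. The supporting line at `u` is parallel to `y`, so
`y ⊥_B u`, and constant area gives `|det(y, u)| = |det(x, y)|`. Hence `x` is a maximizer too, i.e.
the line through `x` parallel to `y` supports `K`: `y ⊥_B x`. -/

local notation "ℝ²" => EuclideanSpace ℝ (Fin 2)

theorem zero_mem_interior_of_eq_neg {E : Type*} [NormedAddCommGroup E] [NormedSpace ℝ E]
    {K : Set E} (hconv : Convex ℝ K) (hint : (interior K).Nonempty) (hsymm : K = -K) :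
    (0 : E) ∈ interior K := by
  obtain ⟨z, hz⟩ := hint
  have hz' : -z ∈ interior K := by
    rw [hsymm, show -K = Homeomorph.neg E ⁻¹' K from rfl, ← Homeomorph.preimage_interior]
    simpa using hz
  simpa using hconv.interior hz hz' one_half_pos.le one_half_pos.le (add_halves 1)

theorem ContinuousLinearMap.lt_of_isMaxOn_of_mem_interior {E : Type*} [NormedAddCommGroup E]
    [NormedSpace ℝ E] {f : E →L[ℝ] ℝ} (hf : f ≠ 0) {K : Set E} {u w : E} (hu : IsMaxOn f K u)
    (hw : w ∈ interior K) : f w < f u := by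
  by_contra! h
  have hmax : IsLocalMax f w :=
    Filter.mem_of_superset (mem_interior_iff_mem_nhds.1 hw) fun v hv => (hu hv).trans h
  exact hf (hmax.hasFDerivAt_eq_zero f.hasFDerivAt)

theorem ContinuousLinearMap.mem_frontier_of_isMaxOn {E : Type*} [NormedAddCommGroup E]
    [NormedSpace ℝ E] {f : E →L[ℝ] ℝ} (hf : f ≠ 0) {K : Set E} {u : E} (huK : u ∈ K)
    (hu : IsMaxOn f K u) : u ∈ frontier K :=
  ⟨subset_closure huK, fun h => (f.lt_of_isMaxOn_of_mem_interior hf hu h).false⟩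

noncomputable def wedge (a : ℝ²) : ℝ² →L[ℝ] ℝ :=
  LinearMap.toContinuousLinearMap
    { toFun := fun b => a 0 * b 1 - a 1 * b 0
      map_add' := fun b c => by simp only [PiLp.add_apply]; ring
      map_smul' := fun r b => by simp only [PiLp.smul_apply, smul_eq_mul, RingHom.id_apply]; ring }

@[simp]
theorem wedge_apply (a b : ℝ²) : wedge a b = a 0 * b 1 - a 1 * b 0 := rfl

theorem wedge_self (a : ℝ²) : wedge a a = 0 := by
  simp only [wedge_apply]; ring

theorem abs_wedge_comm (a b : ℝ²) : |wedge a b| = |wedge b a| := by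
  rw [← abs_neg]; congr 1; simp only [wedge_apply]; ring

theorem exists_add_smul_eq_zero_of_wedge_eq_zero {x y : ℝ²} (hx : x ≠ 0) (h : wedge y x = 0) :
    ∃ t : ℝ, y + t • x = 0 := by
  obtain ⟨i, hi⟩ : ∃ i, x i ≠ 0 := by
    by_contra! h0
    exact hx (PiLp.ext h0)
  rw [wedge_apply] at h
  refine ⟨-(y i / x i), PiLp.ext fun j => ?_⟩
  simp only [PiLp.add_apply, PiLp.smul_apply, smul_eq_mul, PiLp.zero_apply]
  field_simp
  fin_cases i <;> fin_cases j <;> simp <;> linarith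

theorem BirkhoffOrth.wedge_ne_zero {K : Set ℝ²} {x y : ℝ²} (h : BirkhoffOrth K x y)
    (h0 : (0 : ℝ²) ∈ interior K) (hx : x ≠ 0) : wedge y x ≠ 0 := fun hc =>
  let ⟨t, ht⟩ := exists_add_smul_eq_zero_of_wedge_eq_zero hx hc
  h.2 t (ht ▸ h0)

theorem birkhoffOrth_of_isMaxOn {K : Set ℝ²} {f : ℝ² →L[ℝ] ℝ} (hf : f ≠ 0) {y u : ℝ²}
    (hfy : f y = 0) (huK : u ∈ K) (hu : IsMaxOn f K u) : BirkhoffOrth K y u :=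
  ⟨huK, fun t ht => (f.lt_of_isMaxOn_of_mem_interior hf hu ht).ne (by simp [hfy])⟩

noncomputable def stdTriangle : Set ℝ² :=
  convexHull ℝ {0, EuclideanSpace.single 0 1, EuclideanSpace.single 1 1}

theorem convexHull_zero_pair_eq_image (a b : ℝ²) :
    convexHull ℝ ({0, a, b} : Set ℝ²) =
      (EuclideanSpace.basisFun (Fin 2) ℝ).toBasis.constr ℝ ![a, b] '' stdTriangle := by
  rw [stdTriangle, LinearMap.image_convexHull]
  simp [Set.image_insert_eq]

theorem det_constr_basisFun (a b : ℝ²) :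
    LinearMap.det ((EuclideanSpace.basisFun (Fin 2) ℝ).toBasis.constr ℝ ![a, b]) = wedge a b := by
  rw [← LinearMap.det_toMatrix (EuclideanSpace.basisFun (Fin 2) ℝ).toBasis, Matrix.det_fin_two]
  simp [LinearMap.toMatrix_apply, mul_comm]

theorem volume_stdTriangle_pos : 0 < volume stdTriangle := by
  refine (isOpen_interior.measure_pos volume ?_).trans_le (measure_mono interior_subset)
  rw [stdTriangle, interior_convexHull_nonempty_iff_affineSpan_eq_top,
    ← AffineSubspace.coe_eq_univ_iff, affineSpan_insert_zero]
  have hrange : Set.range (EuclideanSpace.basisFun (Fin 2) ℝ).toBasis =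
      {EuclideanSpace.single 0 1, EuclideanSpace.single 1 1} := by
    ext v
    simp [Fin.exists_fin_two, eq_comm]
  rw [Submodule.coe_eq_univ, ← hrange, Module.Basis.span_eq]

theorem volume_stdTriangle_lt_top : volume stdTriangle < ⊤ :=
  ((Set.toFinite _).isCompact_convexHull ℝ).measure_lt_top

theorem volume_convexHull_zero_pair (a b : ℝ²) :
    volume (convexHull ℝ ({0, a, b} : Set ℝ²)) =
      ENNReal.ofReal |wedge a b| * volume stdTriangle := by
  rw [convexHull_zero_pair_eq_image, Measure.addHaar_image_linearMap, det_constr_basisFun]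

theorem area_convexHull_zero_pair_eq_iff (a b a' b' : ℝ²) :
    (volume (convexHull ℝ ({0, a, b} : Set ℝ²))).toReal =
        (volume (convexHull ℝ ({0, a', b'} : Set ℝ²))).toReal ↔ |wedge a b| = |wedge a' b'| := by
  simp only [volume_convexHull_zero_pair, ENNReal.toReal_mul, ENNReal.toReal_ofReal (abs_nonneg _)]
  exact mul_left_inj'
    (ENNReal.toReal_pos volume_stdTriangle_pos.ne' volume_stdTriangle_lt_top.ne).ne'

/-- If the area of `conv{o,x,y}` is a constant over all Birkhoff-orthogonal pairs of boundary
points of an o-symmetric plane convex body, then Birkhoff orthogonality is symmetric. -/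
theorem birkhoffOrth_symm_of_const_triangle_area (K : Set (EuclideanSpace ℝ (Fin 2)))
    (hK : IsConvexBody K) (hsymm : K = -K)
    (hconst : ∃ c : ℝ, ∀ x y : EuclideanSpace ℝ (Fin 2), x ∈ frontier K → y ∈ frontier K →
      BirkhoffOrth K x y →
      (volume (convexHull ℝ ({0, x, y} : Set (EuclideanSpace ℝ (Fin 2))))).toReal = c) :
    ∀ x y : EuclideanSpace ℝ (Fin 2), x ∈ frontier K → y ∈ frontier K →
      BirkhoffOrth K x y → BirkhoffOrth K y x := by
  obtain ⟨hconv, hcomp, hint⟩ := hK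
  obtain ⟨c, hc⟩ := hconst
  intro x y hx hy hxy
  have h0 : (0 : ℝ²) ∈ interior K := zero_mem_interior_of_eq_neg hconv hint hsymm
  have hxK : x ∈ K := hcomp.isClosed.frontier_subset hx
  have hyx : wedge y x ≠ 0 := hxy.wedge_ne_zero h0 fun h => hx.2 (h ▸ h0)
  set g : ℝ² →L[ℝ] ℝ := wedge y x • wedge y
  have hgx : g x = wedge y x ^ 2 := by simp only [g, smul_apply, smul_eq_mul, sq]
  have hg : g ≠ 0 := fun h =>
    hyx <| pow_eq_zero_iff two_ne_zero |>.1 <| by rw [← hgx, h, zero_apply]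
  have hgy : g y = 0 := by simp only [g, smul_apply, wedge_self, smul_zero]
  obtain ⟨u, huK, hu⟩ := hcomp.exists_isMaxOn ⟨x, hxK⟩ g.continuous.continuousOn
  have hyu : BirkhoffOrth K y u := birkhoffOrth_of_isMaxOn hg hgy huK hu
  have harea : |wedge y u| = |wedge y x| := by
    rw [← abs_wedge_comm x y, ← area_convexHull_zero_pair_eq_iff]
    exact (hc y u hy (g.mem_frontier_of_isMaxOn hg huK hu) hyu).trans (hc x y hx hy hxy).symm
  have hxmax : IsMaxOn g K x := isMaxOn_iff.2 fun w hw => (hu hw).trans <|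
    calc g u = wedge y x * wedge y u := rfl
      _ ≤ |wedge y x| * |wedge y u| := abs_mul (wedge y x) _ ▸ le_abs_self _
      _ = g x := by rw [harea, hgx, ← sq, sq_abs]
  exact birkhoffOrth_of_isMaxOn hg hgy hxK hxmax
end
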